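/- On the null-shell chart U of the Schwarzschild exterior of mass M, the following two pointwise identities of vector fields hold at every point of U: φ_−·V_− + φ_+·V_+ = 2r²·𝐑 + 54M²·p_t·∂_t, and φ_−·V_− − φ_+·V_+ = ( 54M²·p_t/(r^{1/2}(r+6M)^{1/2}) )·𝐋, where 𝐑 := −(p_t/Ω²)·∂_t + (p_{r*}/Ω²)·∂_{r*} + ((r−3M)/r⁴)·ℓ²·∂_{p_{r*}} and 𝐋 := −(g(r)·p_{r*}/(Ω²·p_t))·∂_t + g(r)·∂_r + p_{r*}·∂_{p_{r*}} with g(r) := r(r−3M)(r+6M)/(27M²). -/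

import Mathlib

/-!
Write `V₊ = a ∂_t + b ∂_{r*} − (c p_{r*} + d p_t) ∂_{p_{r*}}`, `V₋` with the signs of `a` and `d`
flipped, so that `φ∓ = b p_{r*} ± a p_t`. Both combinations `φ₋V₋ ± φ₊V₊` are then given by
identities valid in any module, and comparing coefficients leaves scalar identities among
`a, b, c, d`: `b² = r²/Ω²`, `ad = bc = (r−3M)/Ω²`, `a² = r²/Ω² − 27M²`,
`bd − ac = 27M²/(r^{1/2}(r+6M)^{1/2})`. The last two both come from the cubic identity
`(r+6M)(r−3M)² = r³ − 27M²(r−2M)`, and the `∂_{p_{r*}}`-component of the first identity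
uses the mass shell `p_t² − p_{r*}² = Ω²ℓ²/r²`.
-/

open Real

noncomputable section

namespace SchwVlasov

/-- Points of the null-shell chart: coordinates `(t, r, θ, φ, p_{r*}, p_θ, p_φ)`. -/
abbrev Pt : Type := Fin 7 → ℝ

/-- The null-shell chart `U`: `r > 2M`, `θ ∈ (0, π)`, `p_θ² + p_φ²/sin²θ > 0`. -/
def U (M : ℝ) : Set Pt :=
  {x | 2 * M < x 1 ∧ 0 < x 2 ∧ x 2 < Real.pi ∧
    0 < (x 5) ^ 2 + (x 6) ^ 2 / (Real.sin (x 2)) ^ 2}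

/-- The Lie bracket `[V, W](x) = DW(x)·V(x) − DV(x)·W(x)` of vector fields on `ℝ⁷`. -/
def lieBracket (V W : Pt → Pt) (x : Pt) : Pt :=
  fderiv ℝ W x (V x) - fderiv ℝ V x (W x)

/-- `Ω²(r) = 1 − 2M/r`. -/
def Om2 (M : ℝ) (x : Pt) : ℝ := 1 - 2 * M / x 1

/-- `Ω(r) = (1 − 2M/r)^{1/2}`. -/
def Om (M : ℝ) (x : Pt) : ℝ := Real.sqrt (Om2 M x)

/-- The total angular momentum `ℓ = (p_θ² + p_φ²/sin²θ)^{1/2}`. -/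
def ell (x : Pt) : ℝ := Real.sqrt ((x 5) ^ 2 + (x 6) ^ 2 / (Real.sin (x 2)) ^ 2)

/-- `p_t = −(p_{r*}² + Ω²ℓ²/r²)^{1/2}`. -/
def ptm (M : ℝ) (x : Pt) : ℝ := -Real.sqrt ((x 4) ^ 2 + Om2 M x * (ell x) ^ 2 / (x 1) ^ 2)

/-- The coordinate vector field `∂_t`. -/
def dt : Pt := ![1, 0, 0, 0, 0, 0, 0]
/-- The coordinate vector field `∂_r`. -/
def dr : Pt := ![0, 1, 0, 0, 0, 0, 0]
/-- The coordinate vector field `∂_θ`. -/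
def dth : Pt := ![0, 0, 1, 0, 0, 0, 0]
/-- The coordinate vector field `∂_φ`. -/
def dph : Pt := ![0, 0, 0, 1, 0, 0, 0]
/-- The coordinate vector field `∂_{p_{r*}}`. -/
def dpr : Pt := ![0, 0, 0, 0, 1, 0, 0]
/-- The coordinate vector field `∂_{p_θ}`. -/
def dpth : Pt := ![0, 0, 0, 0, 0, 1, 0]

/-- The tortoise radial derivative `∂_{r*} = Ω²·∂_r`, viewed as a vector field. -/
def drstar (M : ℝ) (x : Pt) : Pt := Om2 M x • dr

/-- The geodesic spray `𝕏_g`. -/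
def Xg (M : ℝ) (x : Pt) : Pt :=
  (-(ptm M x) / Om2 M x) • dt + (x 4 / Om2 M x) • drstar M x
    + (x 5 / (x 1) ^ 2) • dth + (x 6 / ((x 1) ^ 2 * (Real.sin (x 2)) ^ 2)) • dph
    + ((x 1 - 3 * M) / (x 1) ^ 4 * (ell x) ^ 2) • dpr
    + (Real.cos (x 2) / ((x 1) ^ 2 * (Real.sin (x 2)) ^ 3) * (x 6) ^ 2) • dpth

/-- The trapping weight `φ₋ = (r/Ω)·p_{r*} + (r/Ω)·(1+6M/r)^{1/2}·(1−3M/r)·p_t`. -/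
def phiMinus (M : ℝ) (x : Pt) : ℝ :=
  x 1 / Om M x * x 4
    + x 1 / Om M x * Real.sqrt (1 + 6 * M / x 1) * (1 - 3 * M / x 1) * ptm M x

/-- The trapping vector field
`V₊ = ((r+6M)^{1/2}/(r^{1/2}Ω))·(r−3M)·∂_t + (r/Ω)·∂_{r*}
  − (((r−3M)/(rΩ))·p_{r*} + (r^{1/2}/((r+6M)^{1/2}Ω))·p_t)·∂_{p_{r*}}`. -/
def Vplus (M : ℝ) (x : Pt) : Pt :=
  (Real.sqrt (x 1 + 6 * M) / (Real.sqrt (x 1) * Om M x) * (x 1 - 3 * M)) • dt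
    + (x 1 / Om M x) • drstar M x
    - ((x 1 - 3 * M) / (x 1 * Om M x) * x 4
        + Real.sqrt (x 1) / (Real.sqrt (x 1 + 6 * M) * Om M x) * ptm M x) • dpr

/-- The trapping weight `φ₊ = (r/Ω)·p_{r*} − (r/Ω)·(1+6M/r)^{1/2}·(1−3M/r)·p_t`. -/
def phiPlus (M : ℝ) (x : Pt) : ℝ :=
  x 1 / Om M x * x 4
    - x 1 / Om M x * Real.sqrt (1 + 6 * M / x 1) * (1 - 3 * M / x 1) * ptm M x

/-- The vector field
`V₋ = −((r+6M)^{1/2}/(r^{1/2}Ω))·(r−3M)·∂_t + (r/Ω)·∂_{r*}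
  − (((r−3M)/(rΩ))·p_{r*} − (r^{1/2}/((r+6M)^{1/2}Ω))·p_t)·∂_{p_{r*}}`. -/
def Vminus (M : ℝ) (x : Pt) : Pt :=
  (-(Real.sqrt (x 1 + 6 * M) / (Real.sqrt (x 1) * Om M x) * (x 1 - 3 * M))) • dt
    + (x 1 / Om M x) • drstar M x
    - ((x 1 - 3 * M) / (x 1 * Om M x) * x 4
        - Real.sqrt (x 1) / (Real.sqrt (x 1 + 6 * M) * Om M x) * ptm M x) • dpr

/-- The time-radial part of the geodesic spray,
`𝐑 = −(p_t/Ω²)·∂_t + (p_{r*}/Ω²)·∂_{r*} + ((r−3M)/r⁴)·ℓ²·∂_{p_{r*}}`. -/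
def Rbold (M : ℝ) (x : Pt) : Pt :=
  (-(ptm M x) / Om2 M x) • dt + (x 4 / Om2 M x) • drstar M x
    + ((x 1 - 3 * M) / (x 1) ^ 4 * (ell x) ^ 2) • dpr

/-- `g(r) = r(r−3M)(r+6M)/(27M²)`. -/
def gfun (M rv : ℝ) : ℝ := rv * (rv - 3 * M) * (rv + 6 * M) / (27 * M ^ 2)

/-- The vector field `𝐋 = −(g(r)·p_{r*}/(Ω²·p_t))·∂_t + g(r)·∂_r + p_{r*}·∂_{p_{r*}}`. -/
def Lbold (M : ℝ) (x : Pt) : Pt :=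
  (-(gfun M (x 1) * x 4 / (Om2 M x * ptm M x))) • dt + gfun M (x 1) • dr + x 4 • dpr

theorem trapping_combination_add {R E : Type*} [CommRing R] [AddCommGroup E] [Module R E]
    (a b c d p q : R) (eₜ eᵣ eₚ : E) :
    (b * p + a * q) • ((-a) • eₜ + b • eᵣ - (c * p - d * q) • eₚ)
      + (b * p - a * q) • (a • eₜ + b • eᵣ - (c * p + d * q) • eₚ)
      = (-2 * a ^ 2 * q) • eₜ + (2 * b ^ 2 * p) • eᵣ
        + (2 * (a * d * q ^ 2 - b * c * p ^ 2)) • eₚ := by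
  module

theorem trapping_combination_sub {R E : Type*} [CommRing R] [AddCommGroup E] [Module R E]
    (a b c d p q : R) (eₜ eᵣ eₚ : E) :
    (b * p + a * q) • ((-a) • eₜ + b • eᵣ - (c * p - d * q) • eₚ)
      - (b * p - a * q) • (a • eₜ + b • eᵣ - (c * p + d * q) • eₚ)
      = (-2 * (a * b) * p) • eₜ + (2 * (a * b) * q) • eᵣ
        + (2 * (b * d - a * c) * p * q) • eₚ := by
  module

def tCoeff (M : ℝ) (x : Pt) : ℝ :=
  Real.sqrt (x 1 + 6 * M) / (Real.sqrt (x 1) * Om M x) * (x 1 - 3 * M)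

def rstarCoeff (M : ℝ) (x : Pt) : ℝ := x 1 / Om M x

def prCoeff (M : ℝ) (x : Pt) : ℝ := (x 1 - 3 * M) / (x 1 * Om M x)

def ptCoeff (M : ℝ) (x : Pt) : ℝ := Real.sqrt (x 1) / (Real.sqrt (x 1 + 6 * M) * Om M x)

theorem Vplus_eq (M : ℝ) (x : Pt) :
    Vplus M x = tCoeff M x • dt + rstarCoeff M x • drstar M x
      - (prCoeff M x * x 4 + ptCoeff M x * ptm M x) • dpr := rfl

theorem Vminus_eq (M : ℝ) (x : Pt) :
    Vminus M x = (-tCoeff M x) • dt + rstarCoeff M x • drstar M x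
      - (prCoeff M x * x 4 - ptCoeff M x * ptm M x) • dpr := rfl

section Exterior

variable {M : ℝ} {x : Pt} (hM : 0 ≤ M) (hr : 2 * M < x 1)
include hM hr

theorem r_pos : 0 < x 1 := by linarith

theorem sqrt_r_pos : 0 < Real.sqrt (x 1) := Real.sqrt_pos.mpr (r_pos hM hr)

theorem sqrt_r_add_six_mul_pos : 0 < Real.sqrt (x 1 + 6 * M) := Real.sqrt_pos.mpr (by linarith)

theorem sq_sqrt_r_add_six_mul : Real.sqrt (x 1 + 6 * M) ^ 2 = x 1 + 6 * M :=
  Real.sq_sqrt (by linarith)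

theorem Om2_pos : 0 < Om2 M x := by
  rw [Om2, sub_pos, div_lt_one (r_pos hM hr)]
  exact hr

theorem r_mul_Om2 : x 1 * Om2 M x = x 1 - 2 * M := by
  have hr0 := r_pos hM hr
  rw [Om2]
  field_simp

theorem Om_sq : Om M x ^ 2 = Om2 M x := Real.sq_sqrt (Om2_pos hM hr).le

theorem Om_pos : 0 < Om M x := Real.sqrt_pos.mpr (Om2_pos hM hr)

theorem ptm_sq : ptm M x ^ 2 = x 4 ^ 2 + Om2 M x * ell x ^ 2 / x 1 ^ 2 := by
  have hΩ := Om2_pos hM hr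
  rw [ptm, neg_sq, Real.sq_sqrt (by positivity)]

theorem ptm_neg (hℓ : 0 < (x 5) ^ 2 + (x 6) ^ 2 / (Real.sin (x 2)) ^ 2) : ptm M x < 0 := by
  have hell : 0 < ell x := Real.sqrt_pos.mpr hℓ
  have hΩ := Om2_pos hM hr
  have hr0 := r_pos hM hr
  rw [ptm, neg_lt_zero, Real.sqrt_pos]
  positivity

theorem sqrt_one_add_six_mul_div :
    Real.sqrt (1 + 6 * M / x 1) = Real.sqrt (x 1 + 6 * M) / Real.sqrt (x 1) := by
  have hr0 := r_pos hM hr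
  rw [← Real.sqrt_div' _ hr0.le]
  congr 1
  field_simp

theorem phiMinus_eq : phiMinus M x = rstarCoeff M x * x 4 + tCoeff M x * ptm M x := by
  have hr0 := r_pos hM hr
  rw [phiMinus, sqrt_one_add_six_mul_div hM hr, rstarCoeff, tCoeff]
  field_simp

theorem phiPlus_eq : phiPlus M x = rstarCoeff M x * x 4 - tCoeff M x * ptm M x := by
  have hr0 := r_pos hM hr
  rw [phiPlus, sqrt_one_add_six_mul_div hM hr, rstarCoeff, tCoeff]
  field_simp

theorem rstarCoeff_sq : rstarCoeff M x ^ 2 = x 1 ^ 2 / Om2 M x := by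
  rw [rstarCoeff, div_pow, Om_sq hM hr]

theorem tCoeff_sq : tCoeff M x ^ 2 = x 1 ^ 2 / Om2 M x - 27 * M ^ 2 := by
  have hr0 := r_pos hM hr
  have hΩ := Om2_pos hM hr
  rw [tCoeff, mul_pow, div_pow, mul_pow, sq_sqrt_r_add_six_mul hM hr, Real.sq_sqrt hr0.le,
    Om_sq hM hr]
  field_simp
  linear_combination 27 * M ^ 2 * r_mul_Om2 hM hr

theorem tCoeff_mul_ptCoeff : tCoeff M x * ptCoeff M x = (x 1 - 3 * M) / Om2 M x := by
  have hs := sqrt_r_pos hM hr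
  have hu := sqrt_r_add_six_mul_pos hM hr
  rw [tCoeff, ptCoeff, ← Om_sq hM hr]
  field_simp

theorem rstarCoeff_mul_prCoeff : rstarCoeff M x * prCoeff M x = (x 1 - 3 * M) / Om2 M x := by
  have hr0 := r_pos hM hr
  have hw := Om_pos hM hr
  rw [rstarCoeff, prCoeff, ← Om_sq hM hr]
  field_simp

theorem tCoeff_mul_rstarCoeff (hM₀ : M ≠ 0) : tCoeff M x * rstarCoeff M x
    = 27 * M ^ 2 * gfun M (x 1) / (Real.sqrt (x 1) * Real.sqrt (x 1 + 6 * M) * Om2 M x) := by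
  have hu := sqrt_r_add_six_mul_pos hM hr
  rw [tCoeff, rstarCoeff, gfun, ← Om_sq hM hr]
  field_simp
  rw [sq_sqrt_r_add_six_mul hM hr]

theorem rstarCoeff_mul_ptCoeff_sub_tCoeff_mul_prCoeff :
    rstarCoeff M x * ptCoeff M x - tCoeff M x * prCoeff M x
      = 27 * M ^ 2 / (Real.sqrt (x 1) * Real.sqrt (x 1 + 6 * M)) := by
  have hr0 := r_pos hM hr
  have hw := Om_pos hM hr
  rw [tCoeff, rstarCoeff, prCoeff, ptCoeff]
  field_simp
  rw [Om_sq hM hr]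
  linear_combination x 1 ^ 2 * Real.sq_sqrt hr0.le
    - (x 1 - 3 * M) ^ 2 * sq_sqrt_r_add_six_mul hM hr - 27 * M ^ 2 * r_mul_Om2 hM hr

end Exterior

/-- the pointwise identities
`φ₋·V₋ + φ₊·V₊ = 2r²·𝐑 + 54M²·p_t·∂_t` and
`φ₋·V₋ − φ₊·V₊ = (54M²·p_t/(r^{1/2}(r+6M)^{1/2}))·𝐋` on the null-shell chart. -/
theorem phi_V_decomposition (M : ℝ) (hM : 0 < M) (x : Pt) (hx : x ∈ U M) :
    phiMinus M x • Vminus M x + phiPlus M x • Vplus M x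
        = (2 * (x 1) ^ 2) • Rbold M x + (54 * M ^ 2 * ptm M x) • dt ∧
    phiMinus M x • Vminus M x - phiPlus M x • Vplus M x
        = (54 * M ^ 2 * ptm M x / (Real.sqrt (x 1) * Real.sqrt (x 1 + 6 * M))) • Lbold M x := by
  obtain ⟨hr, -, -, hℓ⟩ := hx
  have hΩ := (Om2_pos hM.le hr).ne'
  have hq := (ptm_neg hM.le hr hℓ).ne
  rw [phiMinus_eq hM.le hr, phiPlus_eq hM.le hr, Vminus_eq, Vplus_eq]
  constructor
  · rw [trapping_combination_add, Rbold]
    match_scalars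
    · rw [tCoeff_sq hM.le hr]; field_simp; ring
    · rw [rstarCoeff_sq hM.le hr]; ring
    · rw [tCoeff_mul_ptCoeff hM.le hr, rstarCoeff_mul_prCoeff hM.le hr, ptm_sq hM.le hr]
      field_simp; ring
  · rw [trapping_combination_sub, Lbold, drstar]
    match_scalars
    · rw [tCoeff_mul_rstarCoeff hM.le hr hM.ne']; field_simp; ring
    · rw [tCoeff_mul_rstarCoeff hM.le hr hM.ne']; field_simp; ring
    · rw [rstarCoeff_mul_ptCoeff_sub_tCoeff_mul_prCoeff hM.le hr]; ring

end SchwVlasov
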